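/- Let α be a countable limit ordinal and (β_n)_{n=1}^∞ the strictly increasing sequence of successor ordinals converging to α used to define F_α. Then for every ordinal β < α, the derived forest (F_α)^β equals the disjoint union of one copy of F_0 for each n with β ≥ β_n together with the derived forests (F_{β_n})^β for each n with β < β_n; moreover (F_α)^α is the disjoint union of countably many copies of F_0 (i.e., countably many isolated vertices). -/

import Mathlib

open Set Filter Topology

noncomputable section

namespace Paper

/-- `y` is an up-neighbor of `x` within the subforest `S`: both belong to `S`, `x < y`,
and no vertex of `S` lies strictly between them. -/
def UpNbrIn {P : Type*} [PartialOrder P] (S : Set P) (x y : P) : Prop :=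
  x ∈ S ∧ y ∈ S ∧ x < y ∧ ∀ z ∈ S, ¬(x < z ∧ z < y)

/-- `x` is a terminal vertex of the subforest `S`: it has no up-neighbors within `S`. -/
def TerminalIn {P : Type*} [PartialOrder P] (S : Set P) (x : P) : Prop :=
  x ∈ S ∧ ∀ y, ¬UpNbrIn S x y

/-- One step of the derived forest operation: delete every terminal vertex whose
down-neighbor has infinitely many terminal up-neighbors. -/
def derStep {P : Type*} [PartialOrder P] (S : Set P) : Set P :=
  S \ {x | TerminalIn S x ∧ ∃ u, UpNbrIn S u x ∧ {y | UpNbrIn S u y ∧ TerminalIn S y}.Infinite}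

/-- Transfinite iteration of the derived forest operation: `derIter S β = S^{(β)}`,
with intersections at limit stages. -/
def derIter {P : Type*} [PartialOrder P] (S : Set P) (β : Ordinal) : Set P :=
  Ordinal.limitRecOn β S (fun _ T => derStep T)
    (fun β _ ih => ⋂ (γ : Ordinal), ⋂ (h : γ < β), ih γ h)

/-- Weak* closure of a set in the dual of a real normed space. -/
def wcl {Z : Type*} [NormedAddCommGroup Z] [NormedSpace ℝ Z]
    (A : Set (StrongDual ℝ Z)) : Set (StrongDual ℝ Z) :=
  StrongDual.toWeakDual ⁻¹' closure (StrongDual.toWeakDual '' A)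

/-- The weak* derived set `A^{(1)} = ⋃ₙ weak*-closure (A ∩ n B_{Z*})`. -/
def derSet {Z : Type*} [NormedAddCommGroup Z] [NormedSpace ℝ Z]
    (A : Set (StrongDual ℝ Z)) : Set (StrongDual ℝ Z) :=
  ⋃ n : ℕ, wcl (A ∩ {f | ‖f‖ ≤ (n : ℝ)})

/-- Transfinite weak* derived sets: `A^{(0)} = A`, `A^{(β+1)} = (A^{(β)})^{(1)}`, and
`A^{(β)} = ⋃_{γ<β} A^{(γ)}` at limit stages. -/
def derSetIter {Z : Type*} [NormedAddCommGroup Z] [NormedSpace ℝ Z]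
    (A : Set (StrongDual ℝ Z)) (α : Ordinal) : Set (StrongDual ℝ Z) :=
  Ordinal.limitRecOn α A (fun _ T => derSet T)
    (fun α _ ih => ⋃ (β : Ordinal), ⋃ (h : β < α), ih β h)

/-- The coefficient attached to a vertex `u` of the forest: the label of its down-neighbor,
or the label of `u` itself when `u` is an initial vertex (`n₀ = n₁`). -/
def coefN {P : Type*} [PartialOrder P] (e : P → ℕ) (u : P) : ℕ :=
  letI := Classical.dec (∃ w, w ⋖ u)
  if h : ∃ w, w ⋖ u then e h.choose else e u

/-- The vector `z*(v)` shortened to the subforest `S`: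
`∑_{u ≤ v, u ∈ S} n_{i-1} z*_{n_i}`. -/
def shortVec {P : Type*} [PartialOrder P] {Z : Type*} [NormedAddCommGroup Z] [NormedSpace ℝ Z]
    (e : P → ℕ) (zs : ℕ → StrongDual ℝ Z) (S : Set P) (v : P) : StrongDual ℝ Z :=
  ∑ᶠ u ∈ ({w | w ≤ v} ∩ S), (coefN e u : ℝ) • zs (e u)

/-- The shortening `X^β` of the set `X_α` to the subforest `S` (for `S = (F_α)^β`);
for `S = univ` this is `X_α` itself. -/
def XsetOf {P : Type*} [PartialOrder P] {Z : Type*} [NormedAddCommGroup Z] [NormedSpace ℝ Z]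
    (e : P → ℕ) (zs : ℕ → StrongDual ℝ Z) (S : Set P) : Set (StrongDual ℝ Z) :=
  {x | ∃ v : P, (¬∃ y, v ⋖ y) ∧ x = shortVec e zs S v}

/-- The largest index in the support of a vector of `X^β` (read off by evaluating
against the basic sequence); it is the label of the vertex `v(x)`. -/
def topIdx {Z : Type*} [NormedAddCommGroup Z] [NormedSpace ℝ Z]
    (z : ℕ → Z) (x : StrongDual ℝ Z) : ℕ :=
  sSup {n | x (z n) ≠ 0}

/-- The vector `y(x)`: `x` with the coordinate at its top vertex `v(x)` replaced by `0`. -/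
def truncTop {Z : Type*} [NormedAddCommGroup Z] [NormedSpace ℝ Z]
    (z : ℕ → Z) (zs : ℕ → StrongDual ℝ Z) (x : StrongDual ℝ Z) :
    StrongDual ℝ Z :=
  x - x (z (topIdx z x)) • zs (topIdx z x)

/-!
Derivation commutes with disjoint unions. It also commutes with adjoining a root below a
forest `G`, as long as no `G^β` has infinitely many isolated vertices: these are exactly the
terminal up-neighbours of the root. By induction on `γ`: for `γ` zero or a successor,
`(F_γ)^γ` is a single vertex and no `(F_γ)^β`, `β < γ`, has an isolated vertex (everything
lies above the root, which has an up-neighbour); for `γ` a limit, `(F_γ)^β` has only finitely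
many isolated vertices when `β < γ` (only the components `F_{γ_n}` with `γ_n ≤ β` contribute,
one vertex each), and `(F_γ)^γ` is an infinite antichain, which one more derivation of
`F_{γ+1}` collapses onto its root. The theorem is then the disjoint-union formula for `F_α`.
-/

section

open Order
open scoped Cardinal

variable {P Q : Type*} [PartialOrder P] [PartialOrder Q]

def isolatedIn (S : Set P) : Set P := {x | TerminalIn S x ∧ ∀ z ∈ S, ¬z < x}

def terminalUpNbrs (S : Set P) (u : P) : Set P := {y | UpNbrIn S u y ∧ TerminalIn S y}

theorem mem_derStep {S : Set P} {x : P} :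
    x ∈ derStep S ↔
      x ∈ S ∧ ¬(TerminalIn S x ∧ ∃ u, UpNbrIn S u x ∧ (terminalUpNbrs S u).Infinite) :=
  Iff.rfl

theorem isolatedIn_subset (S : Set P) : isolatedIn S ⊆ S := fun _ hx => hx.1.1

theorem derStep_subset (S : Set P) : derStep S ⊆ S := sdiff_subset

theorem mem_derStep_of_isMin {S : Set P} {x : P} (hx : x ∈ S) (hmin : IsMin x) :
    x ∈ derStep S :=
  ⟨hx, fun ⟨_, _, hu, _⟩ => hmin.not_lt hu.2.2.1⟩

theorem derStep_eq_self_of_isAntichain {S : Set P} (hS : IsAntichain (· ≤ ·) S) :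
    derStep S = S :=
  (derStep_subset S).antisymm fun _ hx =>
    ⟨hx, fun ⟨_, _, hu, _⟩ => hS hu.1 hu.2.1 hu.2.2.1.ne hu.2.2.1.le⟩

@[simp]
theorem derIter_zero (S : Set P) : derIter S 0 = S :=
  Ordinal.limitRecOn_zero _ _ _

theorem derIter_add_one (S : Set P) (β : Ordinal) :
    derIter S (β + 1) = derStep (derIter S β) :=
  Ordinal.limitRecOn_add_one _ _ _ _

theorem derIter_of_isSuccLimit (S : Set P) {β : Ordinal} (hβ : IsSuccLimit β) :
    derIter S β = ⋂ γ < β, derIter S γ :=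
  Ordinal.limitRecOn_limit _ _ _ _ hβ

theorem derIter_antitone (S : Set P) : Antitone (derIter S) := by
  intro γ β hγβ
  induction β using Ordinal.limitRecOn with
  | zero => rw [nonpos_iff_eq_zero.mp hγβ]
  | add_one β ih =>
    obtain hlt | rfl := hγβ.lt_or_eq
    · rw [derIter_add_one]
      exact (derStep_subset _).trans (ih (lt_add_one_iff.mp hlt))
    · exact le_rfl
  | limit β hβ _ =>
    obtain hlt | rfl := hγβ.lt_or_eq
    · rw [derIter_of_isSuccLimit S hβ]
      exact biInter_subset_of_mem hlt
    · exact le_rfl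

theorem derIter_eq_of_le {S T : Set P} {β₀ β : Ordinal} (h₀ : derIter S β₀ = T)
    (hT : derStep T = T) (hβ : β₀ ≤ β) : derIter S β = T := by
  induction β using Ordinal.limitRecOn with
  | zero => rwa [nonpos_iff_eq_zero.mp hβ] at h₀
  | add_one β ih =>
    obtain hlt | rfl := hβ.lt_or_eq
    · rw [derIter_add_one, ih (lt_add_one_iff.mp hlt), hT]
    · exact h₀
  | limit β hβl ih =>
    refine ((derIter_antitone S hβ).trans_eq h₀).antisymm ?_
    rw [derIter_of_isSuccLimit S hβl]
    refine subset_iInter₂ fun γ hγ => ?_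
    obtain h | h := le_total β₀ γ
    · exact (ih γ hγ h).ge
    · exact h₀.ge.trans (derIter_antitone S h)

theorem exists_upNbrIn_of_lt {S : Set P} {b c : P} (hc : (Iic c).Finite) (hb : b ∈ S)
    (hcS : c ∈ S) (hbc : b < c) : ∃ y, UpNbrIn S b y := by
  have hfin : {z | z ∈ S ∧ b < z ∧ z ≤ c}.Finite := hc.subset fun _ hz => hz.2.2
  obtain ⟨m, hm⟩ := hfin.exists_minimal ⟨c, hcS, hbc, le_rfl⟩
  refine ⟨m, hb, hm.prop.1, hm.prop.2.1, fun z hz ⟨hbz, hzm⟩ => hzm.not_ge ?_⟩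
  exact hm.le_of_le ⟨hz, hbz, hzm.le.trans hm.prop.2.2⟩ hzm.le

theorem isolatedIn_eq_empty_of_isLeast {S : Set P} {b : P} (hb : IsLeast S b)
    (hfin : ∀ x : P, (Iic x).Finite) (hS : ∃ c ∈ S, c ≠ b) : isolatedIn S = ∅ := by
  refine eq_empty_of_forall_notMem fun x ⟨⟨hxS, hterm⟩, hinit⟩ => ?_
  obtain rfl | hbx := (hb.2 hxS).eq_or_lt
  · obtain ⟨c, hcS, hcb⟩ := hS
    obtain ⟨y, hy⟩ := exists_upNbrIn_of_lt (hfin c) hxS hcS ((hb.2 hcS).lt_of_ne' hcb)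
    exact hterm y hy
  · exact hinit b hb.1 hbx

theorem isolatedIn_eq_self_of_isAntichain {S : Set P} (hS : IsAntichain (· ≤ ·) S) :
    isolatedIn S = S :=
  (isolatedIn_subset S).antisymm fun _ hx =>
    ⟨⟨hx, fun _ hy => hS hx hy.2.1 hy.2.2.1.ne hy.2.2.1.le⟩,
      fun _ hz hzx => hS hz hx hzx.ne hzx.le⟩

section Embedding

variable (f : P ↪o Q)

theorem upNbrIn_preimage (hf : IsUpperSet (range f)) {S : Set Q} {a b : P} :
    UpNbrIn (f ⁻¹' S) a b ↔ UpNbrIn S (f a) (f b) := by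
  simp only [UpNbrIn, mem_preimage, f.lt_iff_lt]
  refine and_congr_right fun _ => and_congr_right fun _ => and_congr_right fun _ =>
    ⟨fun h z hz hzab => ?_, fun h z hz hzab => h (f z) hz (by simpa only [f.lt_iff_lt])⟩
  obtain ⟨w, rfl⟩ := hf hzab.1.le (mem_range_self a)
  exact h w hz (by simpa only [f.lt_iff_lt] using hzab)

theorem terminalIn_preimage (hf : IsUpperSet (range f)) {S : Set Q} {a : P} :
    TerminalIn (f ⁻¹' S) a ↔ TerminalIn S (f a) := by
  refine and_congr_right fun _ => ⟨fun h y hy => ?_, fun h y hy => h (f y) ?_⟩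
  · obtain ⟨w, rfl⟩ := hf hy.2.2.1.le (mem_range_self a)
    exact h w ((upNbrIn_preimage f hf).2 hy)
  · exact (upNbrIn_preimage f hf).1 hy

theorem terminalUpNbrs_preimage (hf : IsUpperSet (range f)) (S : Set Q) (u : P) :
    terminalUpNbrs (f ⁻¹' S) u = f ⁻¹' terminalUpNbrs S (f u) := by
  ext y
  exact and_congr (upNbrIn_preimage f hf) (terminalIn_preimage f hf)

theorem terminalUpNbrs_subset_range (hf : IsUpperSet (range f)) (S : Set Q) (u : P) :
    terminalUpNbrs S (f u) ⊆ range f :=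
  fun _ hy => hf hy.1.2.2.1.le (mem_range_self u)

theorem derStep_preimage (hf : IsUpperSet (range f)) {S : Set Q}
    (hS : ∀ u ∉ range f, ∀ a, UpNbrIn S u (f a) → (terminalUpNbrs S u).Finite) :
    derStep (f ⁻¹' S) = f ⁻¹' derStep S := by
  ext a
  have hinf (u : P) :
      (terminalUpNbrs (f ⁻¹' S) u).Infinite ↔ (terminalUpNbrs S (f u)).Infinite := by
    rw [terminalUpNbrs_preimage f hf]
    exact ⟨fun h hfin => h (hfin.preimage f.injective.injOn),
      fun h => h.preimage (terminalUpNbrs_subset_range f hf S u)⟩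
  simp only [mem_preimage, mem_derStep, terminalIn_preimage f hf]
  refine and_congr_right fun _ => not_congr <| and_congr_right fun _ =>
    ⟨fun ⟨u, hu, hu'⟩ => ⟨f u, (upNbrIn_preimage f hf).1 hu, (hinf u).1 hu'⟩, ?_⟩
  rintro ⟨u, hu, hu'⟩
  by_cases hur : u ∈ range f
  · obtain ⟨w, rfl⟩ := hur
    exact ⟨w, (upNbrIn_preimage f hf).2 hu, (hinf w).2 hu'⟩
  · exact absurd (hS u hur a hu) hu'

theorem derIter_preimage (hu : IsUpperSet (range f)) (hl : IsLowerSet (range f))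
    (S : Set Q) (β : Ordinal) : derIter (f ⁻¹' S) β = f ⁻¹' derIter S β := by
  induction β using Ordinal.limitRecOn with
  | zero => simp
  | add_one β ih =>
    rw [derIter_add_one, derIter_add_one, ih,
      derStep_preimage f hu fun u hur a h => absurd (hl h.2.2.1.le (mem_range_self a)) hur]
  | limit β hβ ih =>
    rw [derIter_of_isSuccLimit _ hβ, derIter_of_isSuccLimit _ hβ, preimage_iInter₂]
    exact iInter₂_congr ih

theorem isolatedIn_preimage (hu : IsUpperSet (range f)) (hl : IsLowerSet (range f))
    (S : Set Q) : isolatedIn (f ⁻¹' S) = f ⁻¹' isolatedIn S := by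
  ext a
  refine and_congr (terminalIn_preimage f hu) ⟨fun h z hz hza => ?_, fun h z hz hza => ?_⟩
  · obtain ⟨w, rfl⟩ := hl hza.le (mem_range_self a)
    exact h w hz (f.lt_iff_lt.1 hza)
  · exact h (f z) hz (f.lt_iff_lt.2 hza)

end Embedding

theorem derIter_univ_eq_preimage (e : P ≃o Q) (β : Ordinal) :
    derIter (univ : Set P) β = e ⁻¹' derIter univ β := by
  have hr : range e.toOrderEmbedding = univ := e.surjective.range_eq
  simpa using derIter_preimage e.toOrderEmbedding (hr ▸ isUpperSet_univ)
    (hr ▸ isLowerSet_univ) univ β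

theorem isolatedIn_preimage_orderIso (e : P ≃o Q) (S : Set Q) :
    isolatedIn (e ⁻¹' S) = e ⁻¹' isolatedIn S := by
  have hr : range e.toOrderEmbedding = univ := e.surjective.range_eq
  simpa using isolatedIn_preimage e.toOrderEmbedding (hr ▸ isUpperSet_univ)
    (hr ▸ isLowerSet_univ) S

def derIterOrderIso (e : P ≃o Q) (β : Ordinal) :
    derIter (univ : Set P) β ≃o derIter (univ : Set Q) β where
  toEquiv := e.toEquiv.subtypeEquiv fun x => by rw [derIter_univ_eq_preimage e]; rfl
  map_rel_iff' := e.le_iff_le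

section Sigma

variable {ι : Type*} {R : ι → Type*} [∀ i, PartialOrder (R i)]

theorem sigma_fst_eq_of_le {x y : Σ i, R i} (h : x ≤ y) : x.1 = y.1 :=
  (Sigma.le_def.1 h).1

def sigmaMkEmbedding (i : ι) : R i ↪o Σ i, R i :=
  OrderEmbedding.ofMapLEIff (Sigma.mk i) fun _ _ => Sigma.mk_le_mk_iff

theorem isUpperSet_range_sigmaMkEmbedding (i : ι) :
    IsUpperSet (range (sigmaMkEmbedding (R := R) i)) := by
  rintro x ⟨j, b⟩ hxy ⟨a, rfl⟩
  obtain rfl : i = j := sigma_fst_eq_of_le hxy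
  exact ⟨b, rfl⟩

theorem isLowerSet_range_sigmaMkEmbedding (i : ι) :
    IsLowerSet (range (sigmaMkEmbedding (R := R) i)) := by
  rintro x ⟨j, b⟩ hxy ⟨a, rfl⟩
  obtain rfl : j = i := sigma_fst_eq_of_le hxy
  exact ⟨b, rfl⟩

theorem derIter_univ_sigma (T : ∀ i, Set (R i)) (β : Ordinal) :
    derIter (univ.sigma T) β = univ.sigma fun i => derIter (T i) β := by
  ext ⟨i, a⟩
  have h := derIter_preimage (sigmaMkEmbedding i) (isUpperSet_range_sigmaMkEmbedding i)
    (isLowerSet_range_sigmaMkEmbedding i) (univ.sigma T) β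
  rw [show sigmaMkEmbedding i ⁻¹' univ.sigma T = T i from mk_preimage_sigma (mem_univ i)] at h
  simp only [mk_sigma_iff, mem_univ, true_and, h]
  rfl

theorem isolatedIn_univ_sigma (T : ∀ i, Set (R i)) :
    isolatedIn (univ.sigma T) = univ.sigma fun i => isolatedIn (T i) := by
  ext ⟨i, a⟩
  have h := isolatedIn_preimage (sigmaMkEmbedding i) (isUpperSet_range_sigmaMkEmbedding i)
    (isLowerSet_range_sigmaMkEmbedding i) (univ.sigma T)
  rw [show sigmaMkEmbedding i ⁻¹' univ.sigma T = T i from mk_preimage_sigma (mem_univ i)] at h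
  simp only [mk_sigma_iff, mem_univ, true_and, h]
  rfl

theorem isAntichain_univ_sigma_singleton (r : ∀ i, R i) :
    IsAntichain (· ≤ ·) (univ.sigma fun i => {r i}) := by
  rintro ⟨i, a⟩ ⟨-, rfl : a = r i⟩ ⟨j, b⟩ ⟨-, rfl : b = r j⟩ hne hle
  obtain rfl : i = j := sigma_fst_eq_of_le hle
  exact hne rfl

def univSigmaOrderIso (T : ∀ i, Set (R i)) : univ.sigma T ≃o Σ i, T i where
  toFun x := ⟨x.1.1, x.1.2, x.2.2⟩
  invFun y := ⟨⟨y.1, y.2.1⟩, trivial, y.2.2⟩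
  left_inv _ := rfl
  right_inv _ := rfl
  map_rel_iff' := by
    rintro ⟨⟨i, a⟩, ha⟩ ⟨⟨j, b⟩, hb⟩
    simp only [Equiv.coe_fn_mk, Subtype.mk_le_mk]
    constructor <;> intro h <;> obtain rfl : i = j := sigma_fst_eq_of_le h <;>
      simpa only [Sigma.mk_le_mk_iff, Subtype.mk_le_mk] using h

def sigmaCongrRightOrderIso {R' : ι → Type*} [∀ i, PartialOrder (R' i)]
    (e : ∀ i, R i ≃o R' i) : (Σ i, R i) ≃o Σ i, R' i where
  toEquiv := Equiv.sigmaCongrRight fun i => (e i).toEquiv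
  map_rel_iff' := by
    rintro ⟨i, a⟩ ⟨j, b⟩
    constructor <;> intro h <;> obtain rfl : i = j := sigma_fst_eq_of_le h
    · exact Sigma.mk_le_mk_iff.2 ((e i).le_iff_le.1 (Sigma.mk_le_mk_iff.1 h))
    · exact Sigma.mk_le_mk_iff.2 ((e i).le_iff_le.2 (Sigma.mk_le_mk_iff.1 h))

def derIterSigmaOrderIso (e : P ≃o Σ i, R i) (β : Ordinal) :
    derIter (univ : Set P) β ≃o Σ i, derIter (univ : Set (R i)) β :=
  (derIterOrderIso e β).trans <| (OrderIso.setCongr _ _ <| by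
    rw [← derIter_univ_sigma, sigma_univ, preimage_univ]).trans (univSigmaOrderIso _)

end Sigma

def orderIsoOfSubsingleton (A B : Type*) [PartialOrder A] [PartialOrder B] [Subsingleton A]
    [Subsingleton B] [Nonempty A] [Nonempty B] : A ≃o B where
  toEquiv := equivOfSubsingletonOfSubsingleton (fun _ => Classical.arbitrary B)
    fun _ => Classical.arbitrary A
  map_rel_iff' := iff_of_true (Subsingleton.elim _ _).le (Subsingleton.elim _ _).le

section WithBot

theorem isUpperSet_range_coeOrderHom : IsUpperSet (range (WithBot.coeOrderHom (α := Q))) := by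
  rintro x y hxy ⟨a, rfl⟩
  induction y using WithBot.recBotCoe with
  | bot => exact absurd hxy (WithBot.not_coe_le_bot a)
  | coe b => exact ⟨b, rfl⟩

theorem terminalUpNbrs_bot {S : Set (WithBot Q)} (hS : ⊥ ∈ S) :
    terminalUpNbrs S ⊥ = (↑) '' isolatedIn (WithBot.some ⁻¹' S) := by
  ext y
  induction y using WithBot.recBotCoe with
  | bot => exact iff_of_false (fun h => h.1.2.2.1.false) fun ⟨_, _, h⟩ => WithBot.coe_ne_bot h
  | coe b =>
    have ht := terminalIn_preimage WithBot.coeOrderHom isUpperSet_range_coeOrderHom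
      (S := S) (a := b)
    simp only [WithBot.coeOrderHom_apply] at ht
    rw [WithBot.coe_injective.mem_set_image]
    change UpNbrIn S ⊥ b ∧ TerminalIn S b ↔
      TerminalIn (WithBot.some ⁻¹' S) b ∧ ∀ z ∈ WithBot.some ⁻¹' S, ¬z < b
    rw [ht, and_comm]
    refine and_congr_right fun hbt => ⟨fun hu z hz hzb => ?_,
      fun hinit => ⟨hS, hbt.1, WithBot.bot_lt_coe b, fun z hz ⟨hbz, hzb⟩ => ?_⟩⟩
    · exact hu.2.2.2 z hz ⟨WithBot.bot_lt_coe z, WithBot.coe_lt_coe.2 hzb⟩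
    · induction z using WithBot.recBotCoe with
      | bot => exact hbz.false
      | coe z => exact hinit z hz (WithBot.coe_lt_coe.1 hzb)

theorem derIter_withBot {S : Set (WithBot Q)} (hS : ⊥ ∈ S) {β : Ordinal}
    (hfin : ∀ γ < β, (isolatedIn (derIter (WithBot.some ⁻¹' S) γ)).Finite) :
    ⊥ ∈ derIter S β ∧ WithBot.some ⁻¹' derIter S β = derIter (WithBot.some ⁻¹' S) β := by
  induction β using Ordinal.limitRecOn with
  | zero => simpa using hS
  | add_one β ih =>
    obtain ⟨hbot, hpre⟩ := ih fun γ hγ => hfin γ (hγ.trans (lt_add_one β))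
    rw [derIter_add_one, derIter_add_one, ← hpre]
    refine ⟨mem_derStep_of_isMin hbot isMin_bot,
      (derStep_preimage (WithBot.coeOrderHom (α := Q)) isUpperSet_range_coeOrderHom ?_).symm⟩
    intro u hu _ _
    obtain rfl : u = ⊥ := WithBot.eq_bot_iff_forall_ne.2 fun b h => hu ⟨b, h⟩
    rw [terminalUpNbrs_bot hbot, hpre]
    exact (hfin β (lt_add_one β)).image _
  | limit β hβ ih =>
    have ih' γ (hγ : γ < β) := ih γ hγ fun δ hδ => hfin δ (hδ.trans hγ)
    rw [derIter_of_isSuccLimit _ hβ, derIter_of_isSuccLimit _ hβ, preimage_iInter₂]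
    exact ⟨mem_iInter₂.2 fun γ hγ => (ih' γ hγ).1, iInter₂_congr fun γ hγ => (ih' γ hγ).2⟩

theorem derStep_eq_singleton_bot {S : Set (WithBot Q)} (hS : ⊥ ∈ S)
    (hinf : (WithBot.some ⁻¹' S).Infinite) (hanti : IsAntichain (· ≤ ·) (WithBot.some ⁻¹' S)) :
    derStep S = {⊥} := by
  have hbot := terminalUpNbrs_bot hS
  rw [isolatedIn_eq_self_of_isAntichain hanti] at hbot
  refine subset_antisymm (fun x hx => ?_)
    (singleton_subset_iff.2 (mem_derStep_of_isMin hS isMin_bot))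
  induction x using WithBot.recBotCoe with
  | bot => rfl
  | coe a =>
    have ha : (a : WithBot Q) ∈ terminalUpNbrs S ⊥ :=
      hbot ▸ mem_image_of_mem _ (derStep_subset S hx)
    exact absurd ⟨ha.2, ⊥, ha.1, hbot ▸ hinf.image WithBot.coe_injective.injOn⟩
      (mem_derStep.1 hx).2

end WithBot

structure CollapsesAt (P : Type*) [PartialOrder P] (γ : Ordinal) : Prop where
  isolatedIn_eq_empty : ∀ β < γ, isolatedIn (derIter (univ : Set P) β) = ∅
  exists_eq_singleton : ∃ r, derIter (univ : Set P) γ = {r}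

structure ReachesInfiniteAntichainAt (P : Type*) [PartialOrder P] (γ : Ordinal) : Prop where
  isolatedIn_finite : ∀ β < γ, (isolatedIn (derIter (univ : Set P) β)).Finite
  infinite : (derIter (univ : Set P) γ).Infinite
  isAntichain : IsAntichain (· ≤ ·) (derIter (univ : Set P) γ)

variable {γ : Ordinal}

theorem CollapsesAt.exists_forall_le (h : CollapsesAt P γ) :
    ∃ r, ∀ β, γ ≤ β → derIter (univ : Set P) β = {r} := by
  obtain ⟨r, hr⟩ := h.exists_eq_singleton
  exact ⟨r, fun β hβ => derIter_eq_of_le hr (derStep_eq_self_of_isAntichain .singleton) hβ⟩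

theorem CollapsesAt.of_orderIso (e : P ≃o Q) (h : CollapsesAt Q γ) : CollapsesAt P γ where
  isolatedIn_eq_empty β hβ := by
    rw [derIter_univ_eq_preimage e, isolatedIn_preimage_orderIso,
      h.isolatedIn_eq_empty β hβ, preimage_empty]
  exists_eq_singleton := by
    obtain ⟨r, hr⟩ := h.exists_eq_singleton
    refine ⟨e.symm r, ?_⟩
    rw [derIter_univ_eq_preimage e, hr]
    ext x
    exact e.eq_symm_apply.symm

theorem ReachesInfiniteAntichainAt.of_orderIso (e : P ≃o Q)
    (h : ReachesInfiniteAntichainAt Q γ) : ReachesInfiniteAntichainAt P γ where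
  isolatedIn_finite β hβ := by
    rw [derIter_univ_eq_preimage e, isolatedIn_preimage_orderIso]
    exact (h.isolatedIn_finite β hβ).preimage e.injective.injOn
  infinite := by
    rw [derIter_univ_eq_preimage e]
    exact h.infinite.preimage ((subset_univ _).trans e.surjective.range_eq.ge)
  isAntichain := by
    rw [derIter_univ_eq_preimage e]
    exact h.isAntichain.preimage_iso e

theorem collapsesAt_zero [Subsingleton P] [Nonempty P] : CollapsesAt P 0 where
  isolatedIn_eq_empty β hβ := absurd hβ (not_lt_zero (a := β))
  exists_eq_singleton :=
    ⟨Classical.arbitrary P, by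
      rw [derIter_zero]
      exact eq_singleton_iff_unique_mem.2 ⟨mem_univ _, fun y _ => Subsingleton.elim _ _⟩⟩

theorem collapsesAt_withBot {δ : Ordinal} (hfin : ∀ x : WithBot Q, (Iic x).Finite)
    (h : ReachesInfiniteAntichainAt Q δ) : CollapsesAt (WithBot Q) (δ + 1) where
  isolatedIn_eq_empty β hβ := by
    have hβδ : β ≤ δ := lt_add_one_iff.mp hβ
    obtain ⟨hbot, hpre⟩ := derIter_withBot (mem_univ ⊥) fun γ hγ => by
      simpa using h.isolatedIn_finite γ (hγ.trans_le hβδ)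
    obtain ⟨q, hq⟩ := h.infinite.nonempty
    have hqβ : q ∈ WithBot.some ⁻¹' derIter (univ : Set (WithBot Q)) β := by
      rw [hpre, preimage_univ]
      exact derIter_antitone _ hβδ hq
    exact isolatedIn_eq_empty_of_isLeast ⟨hbot, fun _ _ => bot_le⟩ hfin
      ⟨q, hqβ, WithBot.coe_ne_bot⟩
  exists_eq_singleton := by
    obtain ⟨hbot, hpre⟩ := derIter_withBot (mem_univ ⊥) fun γ hγ => by
      simpa using h.isolatedIn_finite γ hγ
    rw [preimage_univ] at hpre
    refine ⟨⊥, ?_⟩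
    rw [derIter_add_one, derStep_eq_singleton_bot hbot (hpre ▸ h.infinite) (hpre ▸ h.isAntichain)]

theorem reachesInfiniteAntichainAt_sigma {ι : Type*} [Infinite ι] {R : ι → Type*}
    [∀ i, PartialOrder (R i)] (c : ι → Ordinal) (h : ∀ i, CollapsesAt (R i) (c i))
    (hle : ∀ i, c i ≤ γ) (hfin : ∀ β < γ, {i | c i ≤ β}.Finite) :
    ReachesInfiniteAntichainAt (Σ i, R i) γ := by
  choose r hr using fun i => (h i).exists_forall_le
  have hder β : derIter (univ : Set (Σ i, R i)) β = univ.sigma fun i => derIter univ β := by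
    rw [← derIter_univ_sigma, sigma_univ, preimage_univ]
  have hγ : derIter (univ : Set (Σ i, R i)) γ = univ.sigma fun i => {r i} := by
    rw [hder]
    exact congrArg _ (funext fun i => hr i γ (hle i))
  refine ⟨fun β hβ => ?_, ?_, hγ ▸ isAntichain_univ_sigma_singleton r⟩
  · rw [hder, isolatedIn_univ_sigma]
    refine Finite.subset (s := {i | c i ≤ β}.sigma fun i => {r i}) ?_ ?_
    · rw [sigma_eq_biUnion]
      exact (hfin β hβ).biUnion fun i _ => (finite_singleton _).image _
    · rintro ⟨i, a⟩ ⟨-, ha : a ∈ isolatedIn (derIter (univ : Set (R i)) β)⟩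
      by_cases hi : c i ≤ β
      · exact ⟨hi, by simpa [hr i β hi] using isolatedIn_subset _ ha⟩
      · rw [(h i).isolatedIn_eq_empty β (not_le.1 hi)] at ha
        exact ha.elim
  · rw [hγ]
    exact infinite_of_injective_forall_mem (f := fun i => (⟨i, r i⟩ : Σ i, R i))
      (fun i j hij => congrArg Sigma.fst hij) fun i => ⟨trivial, rfl⟩

theorem eq_zero_or_exists_eq_add_one (h : ¬IsSuccLimit γ) :
    γ = 0 ∨ ∃ δ, γ = δ + 1 := by
  obtain h0 | ⟨δ, rfl⟩ | hl := Ordinal.zero_or_succ_or_isSuccLimit γ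
  · exact .inl h0
  · exact .inr ⟨δ, succ_eq_add_one δ⟩
  · exact absurd hl h

/-- `V γ` is a copy of the forest `F_γ` for every countable `γ`, with `seq γ` the sequence
`(γ_n)` chosen at a limit `γ`. -/
structure ForestFamily (V : Ordinal → Type) [∀ γ, PartialOrder (V γ)]
    (seq : Ordinal → ℕ → Ordinal) : Prop where
  subsingleton_zero : Subsingleton (V 0)
  nonempty_zero : Nonempty (V 0)
  finite_Iic : ∀ γ : Ordinal, γ.card ≤ ℵ₀ → ∀ x : V γ, (Iic x).Finite
  strictMono_seq : ∀ γ : Ordinal, γ.card ≤ ℵ₀ → IsSuccLimit γ → StrictMono (seq γ)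
  exists_seq_eq_add_one :
    ∀ γ : Ordinal, γ.card ≤ ℵ₀ → IsSuccLimit γ → ∀ n, ∃ δ, seq γ n = δ + 1
  seq_lt : ∀ γ : Ordinal, γ.card ≤ ℵ₀ → IsSuccLimit γ → ∀ n, seq γ n < γ
  exists_lt_seq : ∀ γ : Ordinal, γ.card ≤ ℵ₀ → IsSuccLimit γ → ∀ δ < γ, ∃ n, δ < seq γ n
  succ_iso : ∀ γ : Ordinal, γ.card ≤ ℵ₀ → (γ = 0 ∨ ∃ δ, γ = δ + 1) →
    Nonempty (V (γ + 1) ≃o WithBot (Σ _ : ℕ, V γ))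
  limit_succ_iso : ∀ γ : Ordinal, γ.card ≤ ℵ₀ → IsSuccLimit γ →
    Nonempty (V (γ + 1) ≃o WithBot (V γ))
  limit_iso : ∀ γ : Ordinal, γ.card ≤ ℵ₀ → IsSuccLimit γ → Nonempty (V γ ≃o Σ n, V (seq γ n))

variable {V : Ordinal → Type} [∀ γ, PartialOrder (V γ)] {seq : Ordinal → ℕ → Ordinal}

theorem ForestFamily.reachesInfiniteAntichainAt (hV : ForestFamily V seq)
    (hγ : γ.card ≤ ℵ₀) (hγl : IsSuccLimit γ) (h : ∀ n, CollapsesAt (V (seq γ n)) (seq γ n)) :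
    ReachesInfiniteAntichainAt (V γ) γ := by
  obtain ⟨e⟩ := hV.limit_iso γ hγ hγl
  refine (reachesInfiniteAntichainAt_sigma (seq γ) h (fun n => (hV.seq_lt γ hγ hγl n).le)
    fun β hβ => ?_).of_orderIso e
  obtain ⟨N, hN⟩ := hV.exists_lt_seq γ hγ hγl β hβ
  exact (finite_Iio N).subset fun n hn =>
    (hV.strictMono_seq γ hγ hγl).lt_iff_lt.1 (lt_of_le_of_lt hn hN)

theorem ForestFamily.collapsesAt (hV : ForestFamily V seq) (hγ : γ.card ≤ ℵ₀)
    (hγl : ¬IsSuccLimit γ) : CollapsesAt (V γ) γ := by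
  induction γ using WellFoundedLT.induction with
  | _ γ ih =>
  have card_le {β : Ordinal} (hβ : β ≤ γ) : β.card ≤ ℵ₀ := (Ordinal.card_le_card hβ).trans hγ
  obtain rfl | ⟨δ, rfl⟩ := eq_zero_or_exists_eq_add_one hγl
  · have := hV.subsingleton_zero
    have := hV.nonempty_zero
    exact collapsesAt_zero
  have hδ := card_le (le_add_right le_rfl)
  have hfin {Q : Type} [PartialOrder Q] (e : V (δ + 1) ≃o WithBot Q) (x : WithBot Q) :
      (Iic x).Finite := by
    simpa using (hV.finite_Iic _ hγ (e.symm x)).image e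
  by_cases hδl : IsSuccLimit δ
  · obtain ⟨e⟩ := hV.limit_succ_iso δ hδ hδl
    refine (collapsesAt_withBot (hfin e)
      (hV.reachesInfiniteAntichainAt hδ hδl fun n => ?_)).of_orderIso e
    have hlt := hV.seq_lt δ hδ hδl n
    obtain ⟨δ', hδ'⟩ := hV.exists_seq_eq_add_one δ hδ hδl n
    exact ih _ (hlt.trans (lt_add_one δ)) (card_le (hlt.le.trans (le_add_right le_rfl)))
      (hδ' ▸ not_isSuccLimit_add_one δ')
  · obtain ⟨e⟩ := hV.succ_iso δ hδ (eq_zero_or_exists_eq_add_one hδl)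
    refine (collapsesAt_withBot (hfin e) (reachesInfiniteAntichainAt_sigma (fun _ => δ)
      (fun _ => ih δ (lt_add_one δ) hδ hδl) (fun _ => le_rfl) fun β hβ => ?_)).of_orderIso e
    simp [not_le.2 hβ]

end

theorem statement6
    (V : Ordinal → Type) [∀ γ : Ordinal, PartialOrder (V γ)]
    (seq : Ordinal → ℕ → Ordinal)
    (hV0 : ∀ x y : V 0, x = y) (hV0ne : Nonempty (V 0))
    (hchainfin : ∀ γ : Ordinal, γ.card ≤ Cardinal.aleph0 → ∀ x : V γ, {y : V γ | y ≤ x}.Finite)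
    (hchainlin : ∀ γ : Ordinal, γ.card ≤ Cardinal.aleph0 →
      ∀ x y w : V γ, y ≤ x → w ≤ x → y ≤ w ∨ w ≤ y)
    (hseqmono : ∀ γ : Ordinal, γ.card ≤ Cardinal.aleph0 → Order.IsSuccLimit γ → StrictMono (seq γ))
    (hseqsucc : ∀ γ : Ordinal, γ.card ≤ Cardinal.aleph0 → Order.IsSuccLimit γ →
      ∀ n : ℕ, ∃ δ : Ordinal, seq γ n = δ + 1)
    (hseqlt : ∀ γ : Ordinal, γ.card ≤ Cardinal.aleph0 → Order.IsSuccLimit γ → ∀ n : ℕ, seq γ n < γ)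
    (hseqcof : ∀ γ : Ordinal, γ.card ≤ Cardinal.aleph0 → Order.IsSuccLimit γ →
      ∀ δ : Ordinal, δ < γ → ∃ n : ℕ, δ < seq γ n)
    (hsucc : ∀ γ : Ordinal, γ.card ≤ Cardinal.aleph0 → (γ = 0 ∨ ∃ δ : Ordinal, γ = δ + 1) →
      Nonempty (V (γ + 1) ≃o WithBot (Σ _ : ℕ, V γ)))
    (hlimsucc : ∀ γ : Ordinal, γ.card ≤ Cardinal.aleph0 → Order.IsSuccLimit γ →
      Nonempty (V (γ + 1) ≃o WithBot (V γ)))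
    (hlim : ∀ γ : Ordinal, γ.card ≤ Cardinal.aleph0 → Order.IsSuccLimit γ →
      Nonempty (V γ ≃o (Σ n : ℕ, V (seq γ n))))
    (α : Ordinal) (hαc : α.card ≤ Cardinal.aleph0) (hαlim : Order.IsSuccLimit α) :
    (∀ β : Ordinal, β < α →
      Nonempty (↥(derIter (Set.univ : Set (V α)) β)
        ≃o (Σ n : ℕ, ↥(derIter (Set.univ : Set (V (seq α n))) β))) ∧
      ∀ n : ℕ, seq α n ≤ β → ∃! x : V (seq α n), x ∈ derIter (Set.univ : Set (V (seq α n))) β) ∧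
    Nonempty (↥(derIter (Set.univ : Set (V α)) α) ≃o (Σ _ : ℕ, V 0)) := by
  have hV : ForestFamily V seq :=
    ⟨⟨hV0⟩, hV0ne, hchainfin, hseqmono, hseqsucc, hseqlt, hseqcof, hsucc, hlimsucc, hlim⟩
  obtain ⟨e⟩ := hlim α hαc hαlim
  have hcoll (n : ℕ) : CollapsesAt (V (seq α n)) (seq α n) := by
    obtain ⟨δ, hδ⟩ := hseqsucc α hαc hαlim n
    exact hV.collapsesAt ((Ordinal.card_le_card (hseqlt α hαc hαlim n).le).trans hαc)
      (hδ ▸ Order.not_isSuccLimit_add_one δ)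
  choose r hr using fun n => (hcoll n).exists_forall_le
  have : Subsingleton (V 0) := ⟨hV0⟩
  refine ⟨fun β _ => ⟨⟨derIterSigmaOrderIso e β⟩, fun n hn => ?_⟩,
    ⟨(derIterSigmaOrderIso e α).trans (sigmaCongrRightOrderIso fun n => ?_)⟩⟩
  · rw [hr n β hn]
    exact existsUnique_eq
  · exact (OrderIso.setCongr _ _ (hr n α (hseqlt α hαc hαlim n).le)).trans
      (orderIsoOfSubsingleton _ _)

end Paper
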